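/- arXiv:2307.06772 — 2 statements merged into one kernel-verified Lean document; each statement's English description precedes it below -/
import Mathlib

section
/- Let v be the first vertex of the path P satisfying the cover condition, and suppose v satisfies the strict cover condition. Then C* := Partition(v) ∩ P_{⪯v} is the unique minimum weight vertex cover of the subpath P_{⪯v}. -/
open Finset

/-- `C` is a vertex cover of the subpath of the path `P = (v_0, …, v_{n-1})`
induced by the vertices `v_lo, v_{lo+1}, …, v_{hi-1}` (half-open interval `[lo, hi)`);
the edges of this subpath are `{v_i, v_{i+1}}` for `lo ≤ i` and `i + 1 < hi`. -/
def IsCoverOn (lo hi : ℕ) (C : Finset ℕ) : Prop :=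
  (∀ j ∈ C, lo ≤ j ∧ j < hi) ∧ ∀ i : ℕ, lo ≤ i → i + 1 < hi → (i ∈ C ∨ i + 1 ∈ C)

/-- The total weight `ω(C) = ∑_{v ∈ C} ω(v)` of a set of vertices. -/
def wsum (ω : ℕ → ℝ) (C : Finset ℕ) : ℝ := ∑ j ∈ C, ω j

/-- `C` is a minimum weight vertex cover (MWVC) of the subpath on the vertices `[lo, hi)`. -/
def IsMWVCOn (ω : ℕ → ℝ) (lo hi : ℕ) (C : Finset ℕ) : Prop :=
  IsCoverOn lo hi C ∧ ∀ D : Finset ℕ, IsCoverOn lo hi D → wsum ω C ≤ wsum ω D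

/-- `Partition(v_l) ∩ P_{⪯ v_l}`: the vertices up to (and including) `v_l` lying on the
same side of the path's bipartition as `v_l`. -/
def sameSide (l : ℕ) : Finset ℕ := (range (l + 1)).filter fun j => j % 2 = l % 2

/-- `P_{⪯ v_l} ∖ Partition(v_l)`: the vertices up to `v_l` on the opposite side. -/
def otherSide (l : ℕ) : Finset ℕ := (range (l + 1)).filter fun j => j % 2 ≠ l % 2

/-- `v_l` satisfies the (weak) cover condition. -/
def CoverCond (ω : ℕ → ℝ) (l : ℕ) : Prop := wsum ω (sameSide l) ≤ wsum ω (otherSide l)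

/-- `v_l` satisfies the strict cover condition. -/
def StrictCoverCond (ω : ℕ → ℝ) (l : ℕ) : Prop := wsum ω (sameSide l) < wsum ω (otherSide l)

/-! Let `t := altPrefixSum ω`, i.e. `t 0 = 0` and `t (k + 1) = ω k - t k`, so that
`ω j = t j + t (j + 1)` and `t (l + 1)` is the difference of the two sides of the bipartition up
to `v_l`. Summing over a cover `D` of `P_{⪯ v_l}` gives
`ω(D) = Σ_{1 ≤ k ≤ l} t k + [v_l ∈ D] t (l + 1) + t(D ∩ (D + 1))`, because every `k ∈ [1, l]`
lies in `D ∪ (D + 1)`. Minimality of `l` makes `t k > 0` for `1 ≤ k ≤ l` and strictness makes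
`t (l + 1) < 0`, so the weight is minimal exactly when `v_l ∈ D` and `D` has no two consecutive
vertices, which pins `D` down to `Partition(v_l) ∩ P_{⪯ v_l}`. -/

lemma self_mem_sameSide (l : ℕ) : l ∈ sameSide l := by
  simp [sameSide]

lemma succ_notMem_sameSide {l j : ℕ} (hj : j ∈ sameSide l) : j + 1 ∉ sameSide l := by
  simp only [sameSide, mem_filter, mem_range] at hj ⊢
  omega

lemma isCoverOn_sameSide (l : ℕ) : IsCoverOn 0 (l + 1) (sameSide l) := by
  simp only [IsCoverOn, sameSide, mem_filter, mem_range]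
  exact ⟨fun j hj => ⟨j.zero_le, hj.1⟩, fun i _ hi => by omega⟩

lemma otherSide_succ (l : ℕ) : otherSide (l + 1) = sameSide l := by
  ext k
  simp only [otherSide, sameSide, mem_filter, mem_range]
  omega

lemma eq_sameSide_of_isCoverOn {l : ℕ} {D : Finset ℕ} (hD : IsCoverOn 0 (l + 1) D)
    (hl : l ∈ D) (hsep : ∀ j ∈ D, j + 1 ∉ D) : D = sameSide l := by
  have hparity : ∀ j ≤ l, (j ∈ D ↔ j % 2 = l % 2) := by
    intro j hj
    induction hj using Nat.decreasingInduction with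
    | self => exact iff_of_true hl rfl
    | of_succ j hjl ih =>
      by_cases h : j + 1 ∈ D
      · exact iff_of_false (fun hj => hsep j hj h) (by have := ih.1 h; omega)
      · exact iff_of_true ((hD.2 j j.zero_le (by omega)).resolve_right h)
          (by have := ih.not.1 h; omega)
  ext j
  simp only [sameSide, mem_filter, mem_range]
  constructor
  · intro hj
    have := (hD.1 j hj).2
    exact ⟨this, (hparity j (by omega)).1 hj⟩
  · rintro ⟨hjl, hpar⟩
    exact (hparity j (by omega)).2 hpar

noncomputable def altPrefixSum (ω : ℕ → ℝ) : ℕ → ℝ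
  | 0 => 0
  | k + 1 => ω k - altPrefixSum ω k

section altPrefixSum

variable (ω : ℕ → ℝ)

@[simp]
lemma altPrefixSum_zero : altPrefixSum ω 0 = 0 := rfl

lemma altPrefixSum_add_altPrefixSum_succ (j : ℕ) :
    altPrefixSum ω j + altPrefixSum ω (j + 1) = ω j := by
  simp [altPrefixSum]

lemma wsum_eq_wsum_union_image_succ_add_wsum_inter (D : Finset ℕ) :
    wsum ω D = wsum (altPrefixSum ω) (D ∪ D.image (· + 1)) +
      wsum (altPrefixSum ω) (D ∩ D.image (· + 1)) := by
  rw [wsum, wsum, wsum, sum_union_inter, sum_image (fun _ _ _ _ h => Nat.succ_injective h),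
    ← sum_add_distrib]
  exact sum_congr rfl fun j _ => (altPrefixSum_add_altPrefixSum_succ ω j).symm

variable {ω}

lemma wsum_union_image_succ_of_isCoverOn {l : ℕ} {D : Finset ℕ} (hD : IsCoverOn 0 (l + 1) D) :
    wsum (altPrefixSum ω) (D ∪ D.image (· + 1)) =
      ∑ k ∈ range l, altPrefixSum ω (k + 1) +
        if l ∈ D then altPrefixSum ω (l + 1) else 0 := by
  set U := D ∪ D.image (· + 1)
  have hU : U ⊆ range (l + 2) := by
    intro k hk
    rcases mem_union.1 hk with hk | hk
    · have := (hD.1 k hk).2; simp only [mem_range]; omega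
    · obtain ⟨j, hj, rfl⟩ := mem_image.1 hk
      have := (hD.1 j hj).2; simp only [mem_range]; omega
  have hsucc : ∀ k < l, k + 1 ∈ U := fun k hk =>
    (hD.2 k k.zero_le (by omega)).elim (fun h => mem_union_right _ (mem_image_of_mem _ h))
      (mem_union_left _)
  have htop : l + 1 ∈ U ↔ l ∈ D := by
    refine ⟨fun h => ?_, fun h => mem_union_right _ (mem_image_of_mem _ h)⟩
    rcases mem_union.1 h with h | h
    · exact absurd (hD.1 _ h).2 (lt_irrefl _)
    · obtain ⟨j, hj, hjl⟩ := mem_image.1 h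
      exact Nat.succ_injective hjl ▸ hj
  rw [wsum, ← filter_mem_eq_inter.trans (inter_eq_right.2 hU), sum_filter, sum_range_succ,
    sum_range_succ', sum_congr rfl fun k hk => if_pos (hsucc k (mem_range.1 hk))]
  simp only [altPrefixSum_zero, ite_self, add_zero, htop]

lemma wsum_eq_of_isCoverOn {l : ℕ} {D : Finset ℕ} (hD : IsCoverOn 0 (l + 1) D) :
    wsum ω D = ∑ k ∈ range l, altPrefixSum ω (k + 1) +
      (if l ∈ D then altPrefixSum ω (l + 1) else 0) +
      wsum (altPrefixSum ω) (D ∩ D.image (· + 1)) := by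
  rw [wsum_eq_wsum_union_image_succ_add_wsum_inter, wsum_union_image_succ_of_isCoverOn hD]

lemma wsum_sameSide (l : ℕ) :
    wsum ω (sameSide l) =
      ∑ k ∈ range l, altPrefixSum ω (k + 1) + altPrefixSum ω (l + 1) := by
  have hsep : sameSide l ∩ (sameSide l).image (· + 1) = ∅ := by
    refine eq_empty_of_forall_notMem fun k hk => ?_
    obtain ⟨j, hj, rfl⟩ := mem_image.1 (mem_inter.1 hk).2
    exact succ_notMem_sameSide hj (mem_inter.1 hk).1
  rw [wsum_eq_of_isCoverOn (isCoverOn_sameSide l), if_pos (self_mem_sameSide l), hsep, wsum,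
    sum_empty, add_zero]

lemma altPrefixSum_succ_eq (l : ℕ) :
    altPrefixSum ω (l + 1) = wsum ω (sameSide l) - wsum ω (otherSide l) := by
  cases l with
  | zero => simp [wsum, sameSide, otherSide, altPrefixSum, filter_singleton]
  | succ l => rw [otherSide_succ, wsum_sameSide, wsum_sameSide, sum_range_succ]; ring

lemma wsum_sameSide_lt_of_isCoverOn {l : ℕ} {D : Finset ℕ}
    (hpos : ∀ k < l, 0 < altPrefixSum ω (k + 1)) (hneg : altPrefixSum ω (l + 1) < 0)
    (hD : IsCoverOn 0 (l + 1) D) (hne : D ≠ sameSide l) :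
    wsum ω (sameSide l) < wsum ω D := by
  have hI : ∀ k ∈ D ∩ D.image (· + 1), 0 < altPrefixSum ω k := by
    intro k hk
    obtain ⟨hkD, hk⟩ := mem_inter.1 hk
    obtain ⟨j, -, rfl⟩ := mem_image.1 hk
    exact hpos j (by have := (hD.1 _ hkD).2; omega)
  rw [wsum_sameSide, wsum_eq_of_isCoverOn hD]
  by_cases hl : l ∈ D
  · obtain ⟨j, hj, hj1⟩ : ∃ j ∈ D, j + 1 ∈ D := by
      by_contra! h
      exact hne (eq_sameSide_of_isCoverOn hD hl h)
    have hjI : j + 1 ∈ D ∩ D.image (· + 1) := mem_inter.2 ⟨hj1, mem_image_of_mem _ hj⟩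
    have : 0 < wsum (altPrefixSum ω) (D ∩ D.image (· + 1)) :=
      sum_pos' (fun k hk => (hI k hk).le) ⟨j + 1, hjI, hI _ hjI⟩
    rw [if_pos hl]
    linarith
  · have : 0 ≤ wsum (altPrefixSum ω) (D ∩ D.image (· + 1)) :=
      sum_nonneg fun k hk => (hI k hk).le
    rw [if_neg hl]
    linarith

end altPrefixSum

theorem stmt_2_general (l : ℕ) (ω : ℕ → ℝ)
    (hfirst : ∀ j, j < l → ¬ CoverCond ω j)
    (hstrict : StrictCoverCond ω l) :
    IsMWVCOn ω 0 (l + 1) (sameSide l) ∧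
      ∀ C : Finset ℕ, IsMWVCOn ω 0 (l + 1) C → C = sameSide l := by
  have hpos : ∀ k < l, 0 < altPrefixSum ω (k + 1) := fun k hk => by
    rw [altPrefixSum_succ_eq]
    exact sub_pos.2 (not_le.1 (hfirst k hk))
  have hneg : altPrefixSum ω (l + 1) < 0 := by
    rw [altPrefixSum_succ_eq]
    exact sub_neg.2 hstrict
  have hlt := fun D hD hne => wsum_sameSide_lt_of_isCoverOn (D := D) hpos hneg hD hne
  refine ⟨⟨isCoverOn_sameSide l, fun D hD => ?_⟩, fun C hC => ?_⟩
  · rcases eq_or_ne D (sameSide l) with rfl | hne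
    exacts [le_rfl, (hlt D hD hne).le]
  · by_contra hne
    exact (hC.2 _ (isCoverOn_sameSide l)).not_gt (hlt C hC.1 hne)

/-- If `v_l` is the first vertex of the path satisfying the cover condition
and it satisfies the strict cover condition, then `Partition(v_l) ∩ P_{⪯ v_l}` is the
unique MWVC of the subpath `P_{⪯ v_l}`. -/
theorem stmt_2 (n l : ℕ) (ω : ℕ → ℝ) (hl : l < n)
    (hcc : CoverCond ω l) (hfirst : ∀ j, j < l → ¬ CoverCond ω j)
    (hstrict : StrictCoverCond ω l) :
    IsMWVCOn ω 0 (l + 1) (sameSide l) ∧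
      ∀ C : Finset ℕ, IsMWVCOn ω 0 (l + 1) C → C = sameSide l :=
  stmt_2_general l ω hfirst hstrict
end

section
/- In Stackelberg Vertex Cover on a path in which no two priceable vertices are adjacent, an optimal pricing exists: the supremum over all pricings π : Pr → ℝ of the leader's revenue rev(π) is finite and is attained by some pricing π*, i.e., there exists π* with rev(π*) = sup_{π} rev(π). -/
open Finset

/-- The weights induced on the vertices by the pricing `π` on the priceable vertices `Pr`
and the fixed weights `ω` on the fixed-price vertices. -/
def wpr (Pr : Finset ℕ) (ω π : ℕ → ℝ) : ℕ → ℝ := fun v => if v ∈ Pr then π v else ω v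

/-- The leader's revenue under the pricing `π`: the maximum, over all minimum weight vertex
covers `C` of the path w.r.t. the induced weights, of `∑_{p ∈ C ∩ Pr} π(p)`
(the follower breaks ties in favor of the leader). -/
noncomputable def rev (n : ℕ) (Pr : Finset ℕ) (ω π : ℕ → ℝ) : ℝ :=
  sSup { r : ℝ | ∃ C : Finset ℕ, IsMWVCOn (wpr Pr ω π) 0 n C ∧ r = ∑ p ∈ C ∩ Pr, π p }

/-
The fixed-price vertices form a vertex cover, since no two priceable vertices are adjacent;
so every minimum weight cover weighs at most their total weight `W`, and so does the revenue.
Raising negative prices to `0` and then capping all prices at `W` never lowers the revenue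
(an optimal cover stays optimal and earns at least as much), so it suffices to maximize over
the box `[0, W]^ℕ`, which is compact. On it the revenue is upper semicontinuous: it is the
maximum, over the finitely many covers `C`, of the linear map `π ↦ ∑_{p ∈ C ∩ Pr} π p`
restricted to the closed set of pricings for which `C` is a minimum weight cover.
-/

theorem upperSemicontinuous_of_closed_pieces {X ι β : Type*} [TopologicalSpace X]
    [LinearOrder β] [TopologicalSpace β] [OrderClosedTopology β] {I : Finset ι}
    {S : ι → Set X} {f : ι → X → β} {g : X → β} (hS : ∀ i ∈ I, IsClosed (S i))
    (hf : ∀ i ∈ I, Continuous (f i)) (hle : ∀ i ∈ I, ∀ x ∈ S i, f i x ≤ g x)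
    (hg : ∀ x, ∃ i ∈ I, x ∈ S i ∧ g x = f i x) : UpperSemicontinuous g := by
  intro x y hxy
  have hnear : ∀ i ∈ I, ∀ᶠ x' in nhds x, x' ∈ S i → f i x' < y := by
    intro i hi
    by_cases hx : x ∈ S i
    · filter_upwards [(hf i hi).continuousAt.eventually_lt continuousAt_const
        ((hle i hi x hx).trans_lt hxy)] with x' hx' _ using hx'
    · filter_upwards [(hS i hi).isOpen_compl.mem_nhds hx] with x' hx' hx'S
      exact absurd hx'S hx'
  filter_upwards [(Filter.eventually_all_finset I).2 hnear] with x' hx'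
  obtain ⟨i, hi, hx'S, hgx'⟩ := hg x'
  exact hgx' ▸ hx' i hi hx'S

section VertexCover

variable {lo hi : ℕ} {w : ℕ → ℝ} {C D N : Finset ℕ}

theorem IsCoverOn.subset_Ico (hC : IsCoverOn lo hi C) : C ⊆ Ico lo hi :=
  fun j hj => mem_Ico.2 (hC.1 j hj)

theorem isCoverOn_Ico : IsCoverOn lo hi (Ico lo hi) :=
  ⟨fun _ hj => mem_Ico.1 hj, fun i hlo hhi => Or.inl (mem_Ico.2 ⟨hlo, by omega⟩)⟩

theorem IsCoverOn.union (hD : IsCoverOn lo hi D) (hN : N ⊆ Ico lo hi) :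
    IsCoverOn lo hi (D ∪ N) := by
  refine ⟨fun j hj => ?_, fun i hlo hhi =>
    (hD.2 i hlo hhi).imp (mem_union_left N) (mem_union_left N)⟩
  rcases mem_union.1 hj with hj | hj
  exacts [hD.1 j hj, mem_Ico.1 (hN hj)]

theorem exists_isMWVCOn (w : ℕ → ℝ) (lo hi : ℕ) : ∃ C, IsMWVCOn w lo hi C := by
  classical
  obtain ⟨C, hC, hmin⟩ := exists_min_image ((Ico lo hi).powerset.filter (IsCoverOn lo hi))
    (wsum w) ⟨Ico lo hi, mem_filter.2 ⟨mem_powerset_self _, isCoverOn_Ico⟩⟩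
  exact ⟨C, (mem_filter.1 hC).2, fun D hD =>
    hmin D (mem_filter.2 ⟨mem_powerset.2 hD.subset_Ico, hD⟩)⟩

/-- The vertices of negative weight all lie in `C`; once they cost nothing they can be added to
any cover for free, so the weight of every cover drops by the same amount. -/
theorem IsMWVCOn.max_zero (hC : IsMWVCOn w lo hi C) :
    IsMWVCOn (fun v => max (w v) 0) lo hi C := by
  classical
  set N := (Ico lo hi).filter (w · < 0)
  have hNC : N ⊆ C := by
    intro v hv
    by_contra hvC
    have hcov := hC.1.union (N := {v}) (singleton_subset_iff.2 (mem_filter.1 hv).1)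
    have hle := hC.2 _ hcov
    rw [wsum, wsum, sum_union (disjoint_singleton_right.2 hvC), sum_singleton] at hle
    linarith [(mem_filter.1 hv).2]
  have hshift : ∀ E ⊆ Ico lo hi,
      wsum (fun v => max (w v) 0) E = wsum w (E ∪ N) - wsum w N := by
    intro E hE
    have hEN : wsum (fun v => max (w v) 0) E = ∑ v ∈ E \ N, w v := by
      rw [wsum, ← sum_subset sdiff_subset fun v hvE hv => max_eq_right ?_]
      · refine sum_congr rfl fun v hv => max_eq_left (not_lt.1 fun hneg => ?_)
        exact (mem_sdiff.1 hv).2 (mem_filter.2 ⟨hE (mem_sdiff.1 hv).1, hneg⟩)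
      · have hvN : v ∈ N := by simpa [hvE] using hv
        exact (mem_filter.1 hvN).2.le
    rw [hEN, wsum, wsum, ← sum_sdiff (subset_union_right (s₁ := E)), union_sdiff_right]
    ring
  refine ⟨hC.1, fun D hD => ?_⟩
  rw [hshift C hC.1.subset_Ico, hshift D hD.subset_Ico, union_eq_left.2 hNC]
  linarith [hC.2 _ (hD.union (N := N) (filter_subset _ _))]

theorem IsMWVCOn.of_heavy {w' : ℕ → ℝ} (hC : IsMWVCOn w lo hi C) (h0 : ∀ v, 0 ≤ w' v)
    (heq : ∀ v ∈ C, w' v = w v) (hheavy : ∀ v, w' v ≠ w v → wsum w C ≤ w' v) :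
    IsMWVCOn w' lo hi C := by
  have hCC : wsum w' C = wsum w C := sum_congr rfl heq
  refine ⟨hC.1, fun D hD => ?_⟩
  rw [hCC]
  by_cases hchange : ∃ v ∈ D, w' v ≠ w v
  · obtain ⟨v, hvD, hv⟩ := hchange
    exact (hheavy v hv).trans (single_le_sum (fun i _ => h0 i) hvD)
  · push Not at hchange
    exact (hC.2 D hD).trans_eq (sum_congr rfl hchange).symm

end VertexCover

section Stackelberg

variable {n : ℕ} {Pr : Finset ℕ} {ω π : ℕ → ℝ} {C : Finset ℕ}

def revenues (n : ℕ) (Pr : Finset ℕ) (ω π : ℕ → ℝ) : Set ℝ :=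
  {r | ∃ C, IsMWVCOn (wpr Pr ω π) 0 n C ∧ r = ∑ p ∈ C ∩ Pr, π p}

theorem finite_revenues (n : ℕ) (Pr : Finset ℕ) (ω π : ℕ → ℝ) :
    (revenues n Pr ω π).Finite := by
  refine ((Ico 0 n).powerset.finite_toSet.image fun C => ∑ p ∈ C ∩ Pr, π p).subset ?_
  rintro _ ⟨C, hC, rfl⟩
  exact ⟨C, mem_powerset.2 hC.1.subset_Ico, rfl⟩

theorem exists_isMWVCOn_rev_eq (n : ℕ) (Pr : Finset ℕ) (ω π : ℕ → ℝ) :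
    ∃ C, IsMWVCOn (wpr Pr ω π) 0 n C ∧ rev n Pr ω π = ∑ p ∈ C ∩ Pr, π p := by
  obtain ⟨C, hC⟩ := exists_isMWVCOn (wpr Pr ω π) 0 n
  exact Set.Nonempty.csSup_mem (s := revenues n Pr ω π) ⟨_, C, hC, rfl⟩
    (finite_revenues n Pr ω π)

theorem le_rev (hC : IsMWVCOn (wpr Pr ω π) 0 n C) : ∑ p ∈ C ∩ Pr, π p ≤ rev n Pr ω π :=
  le_csSup (finite_revenues n Pr ω π).bddAbove ⟨C, hC, rfl⟩

theorem isClosed_setOf_isMWVCOn (Pr : Finset ℕ) (ω : ℕ → ℝ) (lo hi : ℕ) (C : Finset ℕ) :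
    IsClosed {π : ℕ → ℝ | IsMWVCOn (wpr Pr ω π) lo hi C} := by
  have hcont (D : Finset ℕ) : Continuous fun π : ℕ → ℝ => wsum (wpr Pr ω π) D :=
    continuous_finsetSum _ fun v _ => by
      unfold wpr
      split_ifs
      exacts [continuous_apply v, continuous_const]
  simp only [IsMWVCOn, Set.ofPred_and, Set.ofPred_forall]
  exact isClosed_const.inter
    (isClosed_iInter fun D => isClosed_iInter fun _ => isClosed_le (hcont C) (hcont D))

theorem upperSemicontinuous_rev : UpperSemicontinuous (rev n Pr ω) :=
  upperSemicontinuous_of_closed_pieces (I := (Ico 0 n).powerset)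
    (S := fun C => {π | IsMWVCOn (wpr Pr ω π) 0 n C}) (f := fun C π => ∑ p ∈ C ∩ Pr, π p)
    (fun C _ => isClosed_setOf_isMWVCOn Pr ω 0 n C)
    (fun _ _ => continuous_finsetSum _ fun p _ => continuous_apply p)
    (fun _ _ _ hC => le_rev hC)
    (fun π => let ⟨C, hC, hrev⟩ := exists_isMWVCOn_rev_eq n Pr ω π
      ⟨C, mem_powerset.2 hC.1.subset_Ico, hC, hrev⟩)

def fixedWeight (n : ℕ) (Pr : Finset ℕ) (ω : ℕ → ℝ) : ℝ :=
  wsum ω ((range n).filter (· ∉ Pr))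

theorem isCoverOn_fixed (hNoAdj : ∀ q ∈ Pr, q + 1 ∉ Pr) :
    IsCoverOn 0 n ((range n).filter (· ∉ Pr)) := by
  refine ⟨fun j hj => ⟨j.zero_le, mem_range.1 (mem_filter.1 hj).1⟩, fun i _ hi => ?_⟩
  by_cases hiPr : i ∈ Pr
  · exact Or.inr (mem_filter.2 ⟨mem_range.2 hi, hNoAdj i hiPr⟩)
  · exact Or.inl (mem_filter.2 ⟨mem_range.2 (by omega), hiPr⟩)

theorem fixedWeight_nonneg (hω : ∀ v ∉ Pr, 0 ≤ ω v) : 0 ≤ fixedWeight n Pr ω := by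
  unfold fixedWeight wsum
  exact sum_nonneg fun v hv => hω v (mem_filter.1 hv).2

theorem IsMWVCOn.wsum_le_fixedWeight (hNoAdj : ∀ q ∈ Pr, q + 1 ∉ Pr)
    (hC : IsMWVCOn (wpr Pr ω π) 0 n C) : wsum (wpr Pr ω π) C ≤ fixedWeight n Pr ω :=
  (hC.2 _ (isCoverOn_fixed hNoAdj)).trans_eq
    (sum_congr rfl fun _ hv => if_neg (mem_filter.1 hv).2)

theorem wpr_max_zero (hω : ∀ v ∉ Pr, 0 ≤ ω v) (π : ℕ → ℝ) :
    wpr Pr ω (fun v => max (π v) 0) = fun v => max (wpr Pr ω π v) 0 := by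
  funext v
  by_cases hv : v ∈ Pr
  · simp [wpr, hv]
  · simp [wpr, hv, hω v hv]

theorem rev_le_rev_max_zero (hω : ∀ v ∉ Pr, 0 ≤ ω v) (π : ℕ → ℝ) :
    rev n Pr ω π ≤ rev n Pr ω (fun v => max (π v) 0) := by
  obtain ⟨C, hC, hrev⟩ := exists_isMWVCOn_rev_eq n Pr ω π
  rw [hrev]
  refine (sum_le_sum fun p _ => le_max_left _ _).trans (le_rev ?_)
  rw [wpr_max_zero hω]
  exact hC.max_zero

theorem rev_le_rev_min (hNoAdj : ∀ q ∈ Pr, q + 1 ∉ Pr) (hω : ∀ v ∉ Pr, 0 ≤ ω v)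
    (hπ : ∀ v, 0 ≤ π v) {B : ℝ} (hB : fixedWeight n Pr ω ≤ B) :
    rev n Pr ω π ≤ rev n Pr ω (fun v => min (π v) B) := by
  obtain ⟨C, hC, hrev⟩ := exists_isMWVCOn_rev_eq n Pr ω π
  have hw0 (v : ℕ) : 0 ≤ wpr Pr ω π v := by
    unfold wpr
    split_ifs with hv
    exacts [hπ v, hω v hv]
  have hCB : wsum (wpr Pr ω π) C ≤ B := (hC.wsum_le_fixedWeight hNoAdj).trans hB
  have hcheap : ∀ p ∈ C, p ∈ Pr → min (π p) B = π p := fun p hpC hp =>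
    min_eq_left <| (if_pos hp).symm.trans_le <| (single_le_sum (fun i _ => hw0 i) hpC).trans hCB
  have hC' : IsMWVCOn (wpr Pr ω fun v => min (π v) B) 0 n C := by
    refine hC.of_heavy (fun v => ?_) (fun v hvC => ?_) (fun v hv => ?_)
    · unfold wpr
      split_ifs with hvPr
      exacts [le_min (hπ v) ((fixedWeight_nonneg hω).trans hB), hω v hvPr]
    · unfold wpr
      split_ifs with hvPr
      exacts [hcheap v hvC hvPr, rfl]
    · by_cases hvPr : v ∈ Pr
      · simp only [wpr, if_pos hvPr] at hv ⊢
        rwa [min_eq_right (not_le.1 (hv ∘ min_eq_left)).le]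
      · exact absurd (by simp [wpr, hvPr]) hv
  rw [hrev, ← sum_congr rfl fun p hp => hcheap p (mem_inter.1 hp).1 (mem_inter.1 hp).2]
  exact le_rev hC'

end Stackelberg

theorem stmt_17_general (n : ℕ) (Pr : Finset ℕ)
    (hNoAdj : ∀ q ∈ Pr, q + 1 ∉ Pr)
    (ω : ℕ → ℝ) (hω : ∀ v : ℕ, v ∉ Pr → 0 ≤ ω v) :
    BddAbove (Set.range fun π : ℕ → ℝ => rev n Pr ω π) ∧
      ∃ πstar : ℕ → ℝ,
        rev n Pr ω πstar = sSup (Set.range fun π : ℕ → ℝ => rev n Pr ω π) := by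
  set W := fixedWeight n Pr ω
  obtain ⟨πstar, -, hmax⟩ :=
    (upperSemicontinuous_rev.upperSemicontinuousOn (Set.Icc 0 fun _ => W)).exists_isMaxOn
      (Set.nonempty_Icc.2 fun _ => fixedWeight_nonneg hω) isCompact_Icc
  have hgreatest : IsGreatest (Set.range fun π => rev n Pr ω π) (rev n Pr ω πstar) := by
    refine ⟨⟨πstar, rfl⟩, ?_⟩
    rintro _ ⟨π, rfl⟩
    have hclamped : (fun v => min (max (π v) 0) W) ∈ Set.Icc 0 fun _ => W :=
      ⟨fun v => le_min (le_max_right _ _) (fixedWeight_nonneg hω), fun v => min_le_right _ _⟩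
    calc rev n Pr ω π ≤ rev n Pr ω fun v => max (π v) 0 := rev_le_rev_max_zero hω π
      _ ≤ rev n Pr ω fun v => min (max (π v) 0) W :=
        rev_le_rev_min hNoAdj hω (fun v => le_max_right _ _) le_rfl
      _ ≤ rev n Pr ω πstar := hmax hclamped
  exact ⟨hgreatest.bddAbove, πstar, hgreatest.csSup_eq.symm⟩

/-- In StackVC on a path in which no two priceable vertices are
adjacent, an optimal pricing exists: the supremum of the leader's revenue over all
pricings is finite (the range of `rev` is bounded above) and attained by some `π*`. -/
theorem stmt_17 (n : ℕ) (Pr : Finset ℕ) (hPrn : ∀ q ∈ Pr, q < n)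
    (hNoAdj : ∀ q ∈ Pr, q + 1 ∉ Pr)
    (ω : ℕ → ℝ) (hω : ∀ v : ℕ, v ∉ Pr → 0 ≤ ω v) :
    BddAbove (Set.range fun π : ℕ → ℝ => rev n Pr ω π) ∧
      ∃ πstar : ℕ → ℝ,
        rev n Pr ω πstar = sSup (Set.range fun π : ℕ → ℝ => rev n Pr ω π) :=
  stmt_17_general n Pr hNoAdj ω hω
end
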